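/- Let D be a closed disk of radius r > 1 in the plane, let D⁰ be the convex hull of D ∩ ℤ², and let e be an edge of D⁰ with direction given by a primitive lattice vector v of length c. If e contains more than 2 lattice points (i.e., its weight w = |ℤ² ∩ e| − 1 satisfies w > 1), then w ≤ 4√r / c^{3/2}. -/

import Mathlib

/-- The embedding of the integer lattice `ℤ × ℤ` into the Euclidean plane. -/
noncomputable def latticeEmbed (z : ℤ × ℤ) : EuclideanSpace ℝ (Fin 2) :=
  (EuclideanSpace.equiv (Fin 2) ℝ).symm ![(z.1 : ℝ), (z.2 : ℝ)]

/-!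
Suppose `w² c³ > 16 r` and pick a lattice vector `u` with `det (v, u) = 1`. The two lattice lines
parallel to the edge at lattice distance `±1` each contain a point `p ± u + k v` whose projection on
the edge is within `c / 2` of the midpoint of the edge. In coordinates across and along `v` scaled
by `c`, the disk has radius `c r`, the edge is a chord of half-length `w c² / 2`, and the new point
is `1` away from that chord and `c² / 2` away from its midpoint. Moving off the chord costs at most
`2 c r + 1 ≤ 3 c r` in the squared radius, while shortening the half-chord gains
`(w² - 1) c⁴ / 4 ≥ 3 w² c⁴ / 16 > 3 c r`; so both points lie in the disk, hence in `D⁰`. Their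
midpoint lies on the edge, so by extremality they lie on the edge itself, which is absurd.
-/

open Metric

local notation "ℝ²" => EuclideanSpace ℝ (Fin 2)

def wedge (x y : ℝ²) : ℝ := x 0 * y 1 - x 1 * y 0

@[simp] lemma wedge_self (x : ℝ²) : wedge x x = 0 := by
  unfold wedge; ring

@[simp] lemma wedge_add_right (x y z : ℝ²) : wedge x (y + z) = wedge x y + wedge x z := by
  simp only [wedge, PiLp.add_apply]; ring

@[simp] lemma wedge_neg_right (x y : ℝ²) : wedge x (-y) = -wedge x y := by
  simp only [wedge, PiLp.neg_apply]; ring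

@[simp] lemma wedge_smul_right (a : ℝ) (x y : ℝ²) : wedge x (a • y) = a * wedge x y := by
  simp only [wedge, PiLp.smul_apply, smul_eq_mul]; ring

@[simp] lemma wedge_smul_left (a : ℝ) (x y : ℝ²) : wedge (a • x) y = a * wedge x y := by
  simp only [wedge, PiLp.smul_apply, smul_eq_mul]; ring

lemma inner_sq_add_wedge_sq (x y : ℝ²) :
    inner ℝ x y ^ 2 + wedge x y ^ 2 = ‖x‖ ^ 2 * ‖y‖ ^ 2 := by
  simp only [EuclideanSpace.real_norm_sq_eq, PiLp.inner_apply, Fin.sum_univ_two, wedge,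
    RCLike.inner_apply, conj_trivial]
  ring

lemma wedge_sub_eq_zero_of_mem_segment {P Q Z : ℝ²} (h : Z ∈ segment ℝ P Q) :
    wedge (Q - P) (Z - P) = 0 := by
  obtain ⟨θ, -, rfl⟩ := (segment_eq_image' ℝ P Q).subset h
  simp only [add_sub_cancel_left, wedge_smul_right, wedge_self, mul_zero]

lemma add_smul_mem_segment {E : Type*} [AddCommGroup E] [Module ℝ E] (P V : E) {s w : ℝ}
    (hw : 0 < w) (hs : s ∈ Set.Icc 0 w) : P + s • V ∈ segment ℝ P (P + w • V) := by
  rw [segment_eq_image']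
  refine ⟨s / w, ⟨div_nonneg hs.1 hw.le, div_le_one_of_le₀ hs.2 hw.le⟩, ?_⟩
  simp only [add_sub_cancel_left, smul_smul, div_mul_cancel₀ s hw.ne']

lemma midpoint_mem_segment_add_smul {E : Type*} [AddCommGroup E] [Module ℝ E] (P U V : E)
    {k₁ k₂ w : ℝ} (hw : 1 ≤ w) (hk : |k₁ + k₂ - w| ≤ 1) :
    midpoint ℝ (P + U + k₁ • V) (P + -U + k₂ • V) ∈ segment ℝ P (P + w • V) := by
  rw [show midpoint ℝ (P + U + k₁ • V) (P + -U + k₂ • V) = P + ((k₁ + k₂) / 2) • V by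
    simp only [midpoint_eq_smul_add, invOf_eq_inv]; module]
  obtain ⟨hk₁, hk₂⟩ := abs_le.1 hk
  exact add_smul_mem_segment P V (by linarith) ⟨by linarith, by linarith⟩

lemma add_add_smul_notMem_segment {P U V : ℝ²} {k w : ℝ} (hw : w ≠ 0) (hUV : wedge V U ≠ 0) :
    P + U + k • V ∉ segment ℝ P (P + w • V) := fun h => by
  have := wedge_sub_eq_zero_of_mem_segment h
  rw [add_assoc, add_sub_cancel_left, add_sub_cancel_left] at this
  simp only [wedge_smul_left, wedge_add_right, wedge_smul_right, wedge_self, mul_zero,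
    add_zero] at this
  exact mul_ne_zero hw hUV this

@[simp] lemma latticeEmbed_apply_zero (z : ℤ × ℤ) : latticeEmbed z 0 = z.1 := rfl

@[simp] lemma latticeEmbed_apply_one (z : ℤ × ℤ) : latticeEmbed z 1 = z.2 := rfl

lemma latticeEmbed_add (a b : ℤ × ℤ) :
    latticeEmbed (a + b) = latticeEmbed a + latticeEmbed b := by
  ext i; fin_cases i <;> simp

lemma latticeEmbed_neg (a : ℤ × ℤ) : latticeEmbed (-a) = -latticeEmbed a := by
  ext i; fin_cases i <;> simp

lemma latticeEmbed_zsmul (k : ℤ) (a : ℤ × ℤ) :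
    latticeEmbed (k • a) = (k : ℝ) • latticeEmbed a := by
  ext i; fin_cases i <;> simp

lemma latticeEmbed_sub (a b : ℤ × ℤ) :
    latticeEmbed (a - b) = latticeEmbed a - latticeEmbed b := by
  rw [sub_eq_add_neg, latticeEmbed_add, latticeEmbed_neg, sub_eq_add_neg]

lemma wedge_latticeEmbed (a b : ℤ × ℤ) :
    wedge (latticeEmbed a) (latticeEmbed b) = ((a.1 * b.2 - a.2 * b.1 : ℤ) : ℝ) := by
  simp [wedge]

lemma one_le_norm_latticeEmbed {v : ℤ × ℤ} (hv : v ≠ 0) : 1 ≤ ‖latticeEmbed v‖ := by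
  have hsq : ‖latticeEmbed v‖ ^ 2 = ((v.1 ^ 2 + v.2 ^ 2 : ℤ) : ℝ) := by
    simp [EuclideanSpace.real_norm_sq_eq, Fin.sum_univ_two]
  have hpos : 0 < v.1 ^ 2 + v.2 ^ 2 := by
    rcases ne_or_eq v.1 0 with h | h
    · positivity
    · have : v.2 ≠ 0 := fun h' => hv (Prod.ext h h')
      positivity
  have : (1 : ℝ) ≤ ‖latticeEmbed v‖ ^ 2 := by rw [hsq]; exact_mod_cast hpos
  nlinarith [norm_nonneg (latticeEmbed v)]

lemma exists_wedge_latticeEmbed_eq_one {v : ℤ × ℤ} (hv : Int.gcd v.1 v.2 = 1) :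
    ∃ u : ℤ × ℤ, wedge (latticeEmbed v) (latticeEmbed u) = 1 := by
  refine ⟨(-Int.gcdB v.1 v.2, Int.gcdA v.1 v.2), ?_⟩
  have h := Int.gcd_eq_gcd_ab v.1 v.2
  rw [hv] at h
  rw [wedge_latticeEmbed]
  exact_mod_cast (by linear_combination -h : v.1 * v.1.gcdA v.2 - v.2 * -v.1.gcdB v.2 = 1)

lemma sq_add_sq_le_of_near_chord_midpoint {A A' B L g h R : ℝ} (hhL : h ≤ L / 2)
    (hB : A ^ 2 + B ^ 2 ≤ R) (hBL : A ^ 2 + (B + L) ^ 2 ≤ R) (hg : |g - (B + L / 2)| ≤ h)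
    (hA' : A' ^ 2 - A ^ 2 ≤ L ^ 2 / 4 - h ^ 2) : A' ^ 2 + g ^ 2 ≤ R := by
  have hchord : A ^ 2 + (|B + L / 2| + L / 2) ^ 2 ≤ R := by
    rcases abs_cases (B + L / 2) with ⟨hm, -⟩ | ⟨hm, -⟩ <;> rw [hm] <;> nlinarith
  have hg' : g ^ 2 ≤ (|B + L / 2| + h) ^ 2 := by
    rw [← sq_abs g]
    have := abs_sub_abs_le_abs_sub g (B + L / 2)
    exact pow_le_pow_left₀ (abs_nonneg g) (by linarith) 2
  nlinarith [abs_nonneg (g - (B + L / 2)), abs_nonneg (B + L / 2)]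

lemma add_sq_sub_sq_le_of_lt {A σ c r w : ℝ} (hr : 1 ≤ r) (hc : 1 ≤ c) (hw : 2 ≤ w)
    (hwr : 16 * r < w ^ 2 * c ^ 3) (hA : A ^ 2 ≤ (c * r) ^ 2) (hσ : |σ| ≤ 1) :
    (A + σ) ^ 2 - A ^ 2 ≤ (w * c ^ 2) ^ 2 / 4 - (c ^ 2 / 2) ^ 2 := by
  have hAσ : A * σ ≤ c * r := by
    have := abs_le_of_sq_le_sq hA (by positivity)
    calc A * σ ≤ |A| * |σ| := by rw [← abs_mul]; exact le_abs_self _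
      _ ≤ c * r * 1 := by gcongr
      _ = c * r := mul_one _
  have hσ2 : σ ^ 2 ≤ 1 := by rw [← sq_abs]; nlinarith [abs_nonneg σ]
  have hcr : 1 ≤ c * r := one_le_mul_of_one_le_of_one_le hc hr
  have h3 : 3 * (c * r) < 3 / 16 * (w ^ 2 * c ^ 4) := by nlinarith
  have h4 : 3 / 16 * (w ^ 2 * c ^ 4) ≤ (w ^ 2 - 1) * c ^ 4 / 4 := by
    nlinarith [mul_nonneg (pow_pos (by linarith : (0:ℝ) < c) 4).le (by nlinarith : 0 ≤ w ^ 2 - 4)]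
  nlinarith

lemma exists_near_chord_midpoint_mem_closedBall {o P U V : ℝ²} {r w : ℝ} (hr : 1 ≤ r)
    (hV : 1 ≤ ‖V‖) (hw : 2 ≤ w) (hwr : 16 * r < w ^ 2 * ‖V‖ ^ 3) (hUV : |wedge V U| ≤ 1)
    (hP : P ∈ closedBall o r) (hQ : P + w • V ∈ closedBall o r) :
    ∃ k : ℤ, P + U + (k : ℝ) • V ∈ closedBall o r ∧
      |inner ℝ V U / ‖V‖ ^ 2 + k - w / 2| ≤ 1 / 2 := by
  set c := ‖V‖
  set t := inner ℝ V U / c ^ 2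
  have hc : 0 < c ^ 2 := by positivity
  set k : ℤ := round (w / 2 - t)
  have hk : |t + k - w / 2| ≤ 1 / 2 := by
    rw [← abs_neg, neg_sub, sub_add_eq_sub_sub]
    exact abs_sub_round _
  refine ⟨k, ?_, hk⟩
  rw [mem_closedBall_iff_norm] at hP hQ ⊢
  -- in coordinates across and along `V`, scaled by `c`, the disk has radius `c * r`
  have hcoord : ∀ Y : ℝ², wedge V Y ^ 2 + inner ℝ V Y ^ 2 ≤ (c * r) ^ 2 ↔ ‖Y‖ ≤ r := by
    intro Y
    rw [add_comm, inner_sq_add_wedge_sq, mul_pow, mul_le_mul_iff_right₀ hc,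
      pow_le_pow_iff_left₀ (norm_nonneg _) (by linarith) two_ne_zero]
  have hX := (hcoord (P - o)).2 hP
  have hXw := (hcoord (P - o + w • V)).2 (by rwa [sub_add_eq_add_sub])
  rw [show P + U + (k : ℝ) • V - o = P - o + U + (k : ℝ) • V by abel, ← hcoord]
  simp only [inner_add_right, inner_smul_right, real_inner_self_eq_norm_sq, wedge_add_right,
    wedge_smul_right, wedge_self, mul_zero, add_zero] at hXw ⊢
  refine sq_add_sq_le_of_near_chord_midpoint (L := w * c ^ 2) (h := c ^ 2 / 2) (by nlinarith)
    hX hXw ?_ (add_sq_sub_sq_le_of_lt hr hV hw hwr (by nlinarith) hUV)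
  rw [← mul_div_cancel₀ (inner ℝ V U) hc.ne', show inner ℝ V (P - o) + c ^ 2 * t + k * c ^ 2
    - (inner ℝ V (P - o) + w * c ^ 2 / 2) = c ^ 2 * (t + k - w / 2) by ring,
    abs_mul, abs_of_pos hc]
  nlinarith

lemma le_four_mul_sqrt_div_rpow {w c r : ℝ} (hw : 0 ≤ w) (hc : 0 < c)
    (h : w ^ 2 * c ^ 3 ≤ 16 * r) : w ≤ 4 * √r / c ^ (3 / 2 : ℝ) := by
  have hc32 : 0 < c ^ (3 / 2 : ℝ) := Real.rpow_pos_of_pos hc _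
  have hsq : (c ^ (3 / 2 : ℝ)) ^ 2 = c ^ 3 := by
    rw [← Real.rpow_natCast, ← Real.rpow_mul hc.le]; norm_num
  rw [le_div_iff₀ hc32, ← pow_le_pow_iff_left₀ (by positivity) (by positivity) two_ne_zero,
    mul_pow, mul_pow, hsq, Real.sq_sqrt (by nlinarith [pow_pos hc 3, sq_nonneg w])]
  linarith

theorem stmt8_general (o : EuclideanSpace ℝ (Fin 2)) (r : ℝ) (hr : 1 < r)
    (D0 : Set (EuclideanSpace ℝ (Fin 2)))
    (hD0 : D0 = convexHull ℝ (Metric.closedBall o r ∩ Set.range latticeEmbed))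
    (p q v : ℤ × ℤ)
    (hpD : latticeEmbed p ∈ Metric.closedBall o r)
    (hqD : latticeEmbed q ∈ Metric.closedBall o r)
    (hedge : IsExtreme ℝ D0 (segment ℝ (latticeEmbed p) (latticeEmbed q)))
    (hprim : Int.gcd v.1 v.2 = 1)
    (w : ℕ) (hqp : q - p = (w : ℤ) • v)
    (c : ℝ) (hc : c = ‖latticeEmbed v‖)
    (hw : 1 < w) :
    (w : ℝ) ≤ 4 * Real.sqrt r / c ^ ((3:ℝ)/2) := by
  subst hD0 hc
  have hV : 1 ≤ ‖latticeEmbed v‖ := one_le_norm_latticeEmbed (by rintro rfl; simp at hprim)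
  have hw2 : (2 : ℝ) ≤ w := by exact_mod_cast hw
  refine le_four_mul_sqrt_div_rpow (by positivity) (by positivity) (not_lt.1 fun hwr => ?_)
  have hq : latticeEmbed q = latticeEmbed p + (w : ℝ) • latticeEmbed v := by
    rw [← sub_eq_iff_eq_add', ← latticeEmbed_sub, hqp, latticeEmbed_zsmul, Int.cast_natCast]
  rw [hq] at hqD hedge
  obtain ⟨u, hu⟩ := exists_wedge_latticeEmbed_eq_one hprim
  set P := latticeEmbed p
  set V := latticeEmbed v
  have hhull : ∀ (a : ℤ × ℤ) (k : ℤ), P + latticeEmbed a + (k : ℝ) • V ∈ closedBall o r →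
      P + latticeEmbed a + (k : ℝ) • V ∈ convexHull ℝ (closedBall o r ∩ Set.range latticeEmbed) :=
    fun a k h => subset_convexHull ℝ _
      ⟨h, p + a + k • v, by rw [latticeEmbed_add, latticeEmbed_add, latticeEmbed_zsmul]⟩
  obtain ⟨k₁, hZ₁, hk₁⟩ := exists_near_chord_midpoint_mem_closedBall hr.le hV hw2 hwr
    (by rw [hu, abs_one]) hpD hqD
  obtain ⟨k₂, hZ₂, hk₂⟩ := exists_near_chord_midpoint_mem_closedBall (U := latticeEmbed (-u))
    hr.le hV hw2 hwr (by rw [latticeEmbed_neg, wedge_neg_right, hu, abs_neg, abs_one]) hpD hqD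
  rw [latticeEmbed_neg, inner_neg_right, neg_div] at hk₂
  have hk : |(k₁ + k₂ : ℝ) - w| ≤ 1 := by
    rw [abs_le] at hk₁ hk₂ ⊢
    constructor <;> linarith
  have hmid := midpoint_mem_segment_add_smul P (latticeEmbed u) V (by linarith) hk
  rw [← latticeEmbed_neg] at hmid
  exact add_add_smul_notMem_segment (by positivity) (by rw [hu]; exact one_ne_zero)
    (hedge.left_mem_of_mem_openSegment (hhull u k₁ hZ₁) (hhull (-u) k₂ hZ₂) hmid
      (midpoint_mem_openSegment _ _))

/-- Let `D` be a closed disk of radius `r > 1`, `D⁰` the convex hull of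
`D ∩ ℤ²`, and `e` an edge of `D⁰` (a 1-dimensional extreme face) joining
lattice points `p`, `q`, with primitive direction vector `v` of Euclidean
length `c` and weight `w` (so that `q - p = w • v`, i.e. `e` contains `w + 1`
lattice points).  If `w > 1` then `w ≤ 4√r / c^{3/2}`. -/
theorem stmt8 (o : EuclideanSpace ℝ (Fin 2)) (r : ℝ) (hr : 1 < r)
    (D0 : Set (EuclideanSpace ℝ (Fin 2)))
    (hD0 : D0 = convexHull ℝ (Metric.closedBall o r ∩ Set.range latticeEmbed))
    (p q v : ℤ × ℤ) (hpq : p ≠ q)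
    (hpD : latticeEmbed p ∈ Metric.closedBall o r)
    (hqD : latticeEmbed q ∈ Metric.closedBall o r)
    (hedge : IsExtreme ℝ D0 (segment ℝ (latticeEmbed p) (latticeEmbed q)))
    (hprim : Int.gcd v.1 v.2 = 1)
    (w : ℕ) (hqp : q - p = (w : ℤ) • v)
    (c : ℝ) (hc : c = ‖latticeEmbed v‖)
    (hw : 1 < w) :
    (w : ℝ) ≤ 4 * Real.sqrt r / c ^ ((3:ℝ)/2) :=
  stmt8_general o r hr D0 hD0 p q v hpD hqD hedge hprim w hqp c hc hw
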